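/- arXiv:1806.10362 — 3 statements merged into one kernel-verified Lean document; each statement's English description precedes it below -/
import Mathlib

section
/- If a permutation π contains a monotonic interval of length three (i.e., an interval of three contiguous positions whose values form a pattern order-isomorphic to 123 or 321), then the principal Möbius function μ(1, π) of the interval [1, π] in the permutation containment poset equals 0. -/
open scoped Classical

/-- Pattern containment of permutations. -/
def Contains {k n : ℕ} (σ : Equiv.Perm (Fin k)) (π : Equiv.Perm (Fin n)) : Prop :=
  ∃ f : Fin k ↪o Fin n, ∀ i j : Fin k, σ i < σ j ↔ π (f i) < π (f j)

/-- Strict pattern containment. -/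
def StrictContains {k n : ℕ} (σ : Equiv.Perm (Fin k)) (π : Equiv.Perm (Fin n)) : Prop :=
  Contains σ π ∧ ¬ Contains π σ

/-- The Möbius function of the permutation containment poset. -/
noncomputable def mu {k : ℕ} (σ : Equiv.Perm (Fin k)) : (n : ℕ) → Equiv.Perm (Fin n) → ℤ
  | n, π =>
    if Contains σ π then
      if Contains π σ then 1
      else
        - ∑ m ∈ (Finset.range n).attach, ∑ τ : Equiv.Perm (Fin m.1),
            (if Contains σ τ ∧ Contains τ π then mu σ m.1 τ else 0)
    else 0
termination_by n π => n
decreasing_by exact Finset.mem_range.mp m.2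

def pone : Equiv.Perm (Fin 1) := 1
noncomputable def p12 : Equiv.Perm (Fin 2) := 1
noncomputable def p21 : Equiv.Perm (Fin 2) := Equiv.ofBijective ![1, 0] (by decide)
noncomputable def p123 : Equiv.Perm (Fin 3) := 1
noncomputable def p132 : Equiv.Perm (Fin 3) := Equiv.ofBijective ![0, 2, 1] (by decide)
noncomputable def p321 : Equiv.Perm (Fin 3) := Equiv.ofBijective ![2, 1, 0] (by decide)
noncomputable def p1243 : Equiv.Perm (Fin 4) := Equiv.ofBijective ![0, 1, 3, 2] (by decide)
noncomputable def p2143 : Equiv.Perm (Fin 4) := Equiv.ofBijective ![1, 0, 3, 2] (by decide)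
noncomputable def p21354 : Equiv.Perm (Fin 5) := Equiv.ofBijective ![1, 0, 2, 4, 3] (by decide)
noncomputable def p45132 : Equiv.Perm (Fin 5) := Equiv.ofBijective ![3, 4, 0, 2, 1] (by decide)
noncomputable def p25143 : Equiv.Perm (Fin 5) := Equiv.ofBijective ![1, 4, 0, 3, 2] (by decide)
noncomputable def p14532 : Equiv.Perm (Fin 5) := Equiv.ofBijective ![0, 3, 4, 2, 1] (by decide)
noncomputable def p24513 : Equiv.Perm (Fin 5) := Equiv.ofBijective ![1, 3, 4, 0, 2] (by decide)
noncomputable def p256143 : Equiv.Perm (Fin 6) := Equiv.ofBijective ![1, 4, 5, 0, 3, 2] (by decide)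

/-- `π` has an interval (contiguous positions, contiguous values) order-isomorphic to `φ`. -/
def HasIntervalIso {n m : ℕ} (π : Equiv.Perm (Fin n)) (φ : Equiv.Perm (Fin m)) : Prop :=
  ∃ s b : ℕ, s + m ≤ n ∧
    ∀ j : Fin m, ∀ hj : s + j.val < n, ((π ⟨s + j.val, hj⟩) : Fin n).val = b + (φ j).val

def HasUpAdjacency {n : ℕ} (π : Equiv.Perm (Fin n)) : Prop := HasIntervalIso π p12
def HasDownAdjacency {n : ℕ} (π : Equiv.Perm (Fin n)) : Prop := HasIntervalIso π p21
def OpposingAdjacencies {n : ℕ} (π : Equiv.Perm (Fin n)) : Prop :=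
  HasUpAdjacency π ∧ HasDownAdjacency π
def AdjacencyFree {n : ℕ} (π : Equiv.Perm (Fin n)) : Prop :=
  ¬ HasUpAdjacency π ∧ ¬ HasDownAdjacency π

def revP {n : ℕ} (π : Equiv.Perm (Fin n)) : Equiv.Perm (Fin n) := (Fin.revPerm).trans π
def complP {n : ℕ} (π : Equiv.Perm (Fin n)) : Equiv.Perm (Fin n) := π.trans Fin.revPerm

/-- The eight symmetries of a permutation under the dihedral group of the square. -/
def symmetries {n : ℕ} (π : Equiv.Perm (Fin n)) : Set (Equiv.Perm (Fin n)) :=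
  {π, revP π, complP π, revP (complP π), π⁻¹, revP π⁻¹, complP π⁻¹, revP (complP π⁻¹)}

def posMap (c m i : ℕ) : ℕ := if i ≤ c then i else i + m - 1

/-- `π` is the inflation of `σ` at position `c` by `α` (all other points singletons). -/
def IsInflationAt {n m N : ℕ} (σ : Equiv.Perm (Fin n)) (c : Fin n) (α : Equiv.Perm (Fin m))
    (π : Equiv.Perm (Fin N)) : Prop :=
  N + 1 = n + m ∧
  (∃ b : ℕ, ∀ j : Fin m, ∀ hj : c.val + j.val < N,
      ((π ⟨c.val + j.val, hj⟩) : Fin N).val = b + (α j).val) ∧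
  (∀ i i' : Fin n, ∀ hi : posMap c.val m i.val < N, ∀ hi' : posMap c.val m i'.val < N,
    (σ i < σ i' ↔ π ⟨posMap c.val m i.val, hi⟩ < π ⟨posMap c.val m i'.val, hi'⟩))

/-- `π` is the inflation `σ[α 0, …, α (n-1)]`. -/
def IsInflation {n N : ℕ} (σ : Equiv.Perm (Fin n))
    (α : Fin n → Σ m : ℕ, Equiv.Perm (Fin m)) (π : Equiv.Perm (Fin N)) : Prop :=
  (∀ i, 1 ≤ (α i).1) ∧
  N = ∑ i, (α i).1 ∧
  (∃ b : Fin n → ℕ,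
    (∀ i : Fin n, ∀ j : Fin (α i).1,
        ∀ hj : (∑ i' ∈ Finset.univ.filter (fun i' => i' < i), (α i').1) + j.val < N,
      ((π ⟨(∑ i' ∈ Finset.univ.filter (fun i' => i' < i), (α i').1) + j.val, hj⟩) : Fin N).val
        = b i + ((α i).2 j).val) ∧
    (∀ i i' : Fin n, σ i < σ i' ↔ b i < b i'))

abbrev SigmaPerm := Σ m : ℕ, Equiv.Perm (Fin m)

def SContains (σ τ : SigmaPerm) : Prop := Contains σ.2 τ.2
def SLt (σ τ : SigmaPerm) : Prop := StrictContains σ.2 τ.2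

/-- The set of strongly zero permutations. -/
def SZ : Set SigmaPerm :=
  {φ | ∀ (N : ℕ) (π : Equiv.Perm (Fin N)), HasIntervalIso π φ.2 → mu pone N π = 0}

/-- The closure of a permutation: everything it contains. -/
def permClosure (φ : SigmaPerm) : Set SigmaPerm := {τ | SContains τ φ}

/-- The cover of `φ`: permutations covered by `φ`. -/
def permCover (φ : SigmaPerm) : Set SigmaPerm :=
  {ψ | SLt ψ φ ∧ ¬ ∃ τ : SigmaPerm, SLt ψ τ ∧ SLt τ φ}

/-- The ground of a set of permutations. -/
def permGround (L : Set SigmaPerm) : Set SigmaPerm :=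
  (⋃ l ∈ L, permClosure l) \ SZ

def IsCore (ψ φ : SigmaPerm) : Prop :=
  ψ ∈ permCover φ ∧ permGround (permCover φ \ {ψ}) ⊆ permClosure ψ

def Nice (φ : SigmaPerm) : Prop := mu pone φ.1 φ.2 = 0 ∧ ∃ ψ, IsCore ψ φ

/-- A permutation is simple if its only intervals have size 1 or `n`. -/
def IsSimple {n : ℕ} (π : Equiv.Perm (Fin n)) : Prop :=
  ∀ s m : ℕ, 1 ≤ m → s + m ≤ n →
    (∃ b : ℕ, ∀ j : ℕ, ∀ hj : j < m, ∀ h : s + j < n,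
      b ≤ ((π ⟨s + j, h⟩) : Fin n).val ∧ ((π ⟨s + j, h⟩) : Fin n).val < b + m) →
    m = 1 ∨ m = n

/-- The number of simple permutations of length `m`. -/
noncomputable def numSimple (m : ℕ) : ℕ :=
  (Finset.univ.filter (fun π : Equiv.Perm (Fin m) => IsSimple π)).card

/-- The proportion of permutations of length `n` with principal Möbius function zero. -/
noncomputable def Zprop (n : ℕ) : ℝ :=
  ((Finset.univ.filter (fun π : Equiv.Perm (Fin n) => mu pone n π = 0)).card : ℝ) / (n.factorial : ℝ)

/-- The proportion of permutations of length `n` that are strongly zero. -/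
noncomputable def Zsz (n : ℕ) : ℝ :=
  ((Finset.univ.filter (fun π : Equiv.Perm (Fin n) => (⟨n, π⟩ : SigmaPerm) ∈ SZ)).card : ℝ) / (n.factorial : ℝ)

section TripleAux
open Equiv Finset

lemma contains_refl {n : ℕ} (π : Equiv.Perm (Fin n)) : Contains π π :=
  ⟨(OrderIso.refl _).toOrderEmbedding, fun _ _ => by simp⟩

lemma contains_pone {n : ℕ} (hn : 0 < n) (π : Equiv.Perm (Fin n)) : Contains pone π := by
  refine ⟨OrderEmbedding.ofStrictMono (fun _ => ⟨0, hn⟩) ?_, ?_⟩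
  · intro i j hij
    exact absurd (Subsingleton.elim i j) (ne_of_lt hij)
  · intro i j
    rw [Subsingleton.elim i j]
    simp

lemma not_contains_pone {n : ℕ} (hn : 2 ≤ n) (π : Equiv.Perm (Fin n)) : ¬ Contains π pone := by
  rintro ⟨f, -⟩
  have h0 : (⟨0, by omega⟩ : Fin n) ≠ ⟨1, by omega⟩ := by simp
  exact h0 (f.injective (Subsingleton.elim _ _))

lemma orderEmbedding_fin_id {N : ℕ} (f : Fin N ↪o Fin N) (i : Fin N) : f i = i := by
  have hb : Function.Surjective f := (Finite.injective_iff_bijective.mp f.injective).surjective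
  have h2 : StrictMono.orderIsoOfSurjective f f.strictMono hb i = f i := rfl
  rw [Subsingleton.elim (StrictMono.orderIsoOfSurjective f f.strictMono hb)
    (OrderIso.refl (Fin N))] at h2
  exact h2.symm

lemma contains_eq {N : ℕ} {τ ρ : Equiv.Perm (Fin N)} (h : Contains τ ρ) : τ = ρ := by
  obtain ⟨f, hf⟩ := h
  have hfi : ∀ i, f i = i := orderEmbedding_fin_id f
  have hiff : ∀ i j, τ i < τ j ↔ ρ i < ρ j := by
    intro i j
    have := hf i j
    rwa [hfi i, hfi j] at this
  have hsm : StrictMono (fun a => ρ (τ.symm a)) := by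
    intro a b hab
    exact (hiff (τ.symm a) (τ.symm b)).mp (by simpa using hab)
  have hid : ∀ a, ρ (τ.symm a) = a := fun a =>
    orderEmbedding_fin_id (OrderEmbedding.ofStrictMono _ hsm) a
  apply Equiv.ext
  intro i
  have := hid (τ i)
  simpa using this.symm

end TripleAux
def delVal (v w : ℕ) : ℕ := if w < v then w else w - 1

lemma delVal_lt_iff {v w1 w2 : ℕ} (h1 : w1 ≠ v) (h2 : w2 ≠ v) :
    delVal v w1 < delVal v w2 ↔ w1 < w2 := by
  unfold delVal
  split <;> split <;> omega

noncomputable def delPfun {N : ℕ} (π : Equiv.Perm (Fin (N+1))) (q : Fin (N+1)) (j : Fin N) :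
    Fin N :=
  ⟨delVal (π q).val (π (q.succAbove j)).val, by
    have hne : (π (q.succAbove j)).val ≠ (π q).val := by
      intro hc
      exact Fin.succAbove_ne q j (π.injective (Fin.val_injective hc))
    have h1 : (π (q.succAbove j)).val < N + 1 := (π (q.succAbove j)).isLt
    have h2 : (π q).val < N + 1 := (π q).isLt
    have h3 : 0 < N := Fin.pos_iff_nonempty.mpr ⟨j⟩
    unfold delVal
    split <;> omega⟩

lemma delPfun_lt_iff {N : ℕ} (π : Equiv.Perm (Fin (N+1))) (q : Fin (N+1)) (j1 j2 : Fin N) :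
    delPfun π q j1 < delPfun π q j2 ↔ π (q.succAbove j1) < π (q.succAbove j2) := by
  have hne : ∀ j : Fin N, (π (q.succAbove j)).val ≠ (π q).val := by
    intro j hc
    exact Fin.succAbove_ne q j (π.injective (Fin.val_injective hc))
  rw [Fin.lt_def, Fin.lt_def]
  exact delVal_lt_iff (hne j1) (hne j2)

noncomputable def delP {N : ℕ} (π : Equiv.Perm (Fin (N+1))) (q : Fin (N+1)) :
    Equiv.Perm (Fin N) :=
  Equiv.ofBijective (delPfun π q) (Finite.injective_iff_bijective.mp (by
    intro j1 j2 h
    have h1 := delPfun_lt_iff π q j1 j2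
    have h2 := delPfun_lt_iff π q j2 j1
    rw [h] at h1 h2
    simp only [lt_self_iff_false, false_iff, not_lt] at h1 h2
    have : π (q.succAbove j1) = π (q.succAbove j2) := le_antisymm h2 h1
    exact Fin.succAbove_right_injective (π.injective this)))

lemma delP_lt_iff {N : ℕ} (π : Equiv.Perm (Fin (N+1))) (q : Fin (N+1)) (j1 j2 : Fin N) :
    delP π q j1 < delP π q j2 ↔ π (q.succAbove j1) < π (q.succAbove j2) := by
  rw [delP, Equiv.ofBijective_apply, Equiv.ofBijective_apply]
  exact delPfun_lt_iff π q j1 j2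

lemma contains_delP {N k : ℕ} {π : Equiv.Perm (Fin (N+1))} {q : Fin (N+1)}
    {τ : Equiv.Perm (Fin k)} (h : Contains τ (delP π q)) : Contains τ π := by
  obtain ⟨f, hf⟩ := h
  refine ⟨f.trans (Fin.succAboveOrderEmb q), fun i j => ?_⟩
  rw [hf i j, delP_lt_iff]
  rfl

lemma contains_of_avoid {N k : ℕ} (π : Equiv.Perm (Fin (N+1))) (q : Fin (N+1))
    {τ : Equiv.Perm (Fin k)} (f : Fin k ↪o Fin (N+1))
    (hf : ∀ i j, τ i < τ j ↔ π (f i) < π (f j)) (hq : ∀ i, f i ≠ q) :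
    Contains τ (delP π q) := by
  choose g hg using fun i => Fin.exists_succAbove_eq (hq i)
  have hsm : StrictMono g := by
    intro i j hij
    have h1 : q.succAbove (g i) < q.succAbove (g j) := by
      rw [hg, hg]
      exact f.strictMono hij
    exact (Fin.succAboveOrderEmb q).lt_iff_lt.mp h1
  refine ⟨OrderEmbedding.ofStrictMono g hsm, fun i j => ?_⟩
  rw [hf i j]
  simp only [OrderEmbedding.coe_ofStrictMono]
  rw [delP_lt_iff, hg, hg]
lemma reroute_one {N k : ℕ} (π : Equiv.Perm (Fin (N+1))) {τ : Equiv.Perm (Fin k)}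
    (f : Fin k ↪o Fin (N+1)) (hf : ∀ i j, τ i < τ j ↔ π (f i) < π (f j))
    (q r : Fin (N+1)) (i2 : Fin k) (hi2 : f i2 = q)
    (hr : ∀ i, f i ≠ r)
    (hpos : ∀ x : Fin (N+1), x ≠ q → x ≠ r → (x < q ↔ x < r))
    (hadj : (π r).val + 1 = (π q).val ∨ (π q).val + 1 = (π r).val) :
    Contains τ (delP π q) := by
  classical
  set f' : Fin k → Fin (N+1) := fun i => if i = i2 then r else f i with hf'
  have hne_q : ∀ i, i ≠ i2 → f i ≠ q := fun i hi hc => hi (f.injective (hc.trans hi2.symm))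
  have hrq : r ≠ q := fun hc => hr i2 (hi2.trans hc.symm)
  have hsm : StrictMono f' := by
    intro i j hij
    simp only [hf']
    by_cases hi : i = i2 <;> by_cases hj : j = i2
    · exact absurd (hi.trans hj.symm) (ne_of_lt hij)
    · subst hi
      simp only [if_pos rfl, if_neg hj]
      have hq : q < f j := hi2 ▸ f.strictMono hij
      rcases lt_trichotomy (f j) r with h | h | h
      · exact absurd ((hpos (f j) (hne_q j hj) (hr j)).mpr h) (not_lt.mpr (le_of_lt hq))
      · exact absurd h (hr j)
      · exact h
    · subst hj
      simp only [if_neg hi, if_pos rfl]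
      have hq : f i < q := hi2 ▸ f.strictMono hij
      exact (hpos (f i) (hne_q i hi) (hr i)).mp hq
    · simp only [if_neg hi, if_neg hj]
      exact f.strictMono hij
  have hvq : ∀ i, i ≠ i2 → (π (f i)).val ≠ (π q).val := by
    intro i hi hc
    exact hne_q i hi (π.injective (Fin.val_injective hc))
  have hvr : ∀ i, (π (f i)).val ≠ (π r).val := by
    intro i hc
    exact hr i (π.injective (Fin.val_injective hc))
  refine contains_of_avoid π q (OrderEmbedding.ofStrictMono f' hsm) ?_ ?_
  · intro i j
    simp only [OrderEmbedding.coe_ofStrictMono, hf']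
    by_cases hij : i = j
    · subst hij
      simp
    by_cases hi : i = i2 <;> by_cases hj : j = i2
    · exact absurd (hi.trans hj.symm) hij
    · rw [if_pos hi, if_neg hj, hf i j, hi, hi2, Fin.lt_def, Fin.lt_def]
      have h1 := hvq j hj
      have h2 := hvr j
      omega
    · rw [if_neg hi, if_pos hj, hf i j, hj, hi2, Fin.lt_def, Fin.lt_def]
      have h1 := hvq i hi
      have h2 := hvr i
      omega
    · simp only [if_neg hi, if_neg hj]
      exact hf i j
  · intro i
    simp only [OrderEmbedding.coe_ofStrictMono, hf']
    by_cases hi : i = i2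
    · simpa [hi] using hrq
    · simpa [hi] using hne_q i hi
lemma consec {N k : ℕ} (π : Equiv.Perm (Fin (N+1))) {τ : Equiv.Perm (Fin k)}
    (f : Fin k ↪o Fin (N+1)) (hf : ∀ i j, τ i < τ j ↔ π (f i) < π (f j))
    (ia ib : Fin k) (hpv : (π (f ia)).val + 1 = (π (f ib)).val) :
    (τ ib).val = (τ ia).val + 1 := by
  have hab : τ ia < τ ib := (hf ia ib).mpr (Fin.lt_def.mpr (by omega))
  by_contra hc
  have h1 : (τ ia).val + 1 < (τ ib).val := by
    have := Fin.lt_def.mp hab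
    omega
  have hlk : (τ ia).val + 1 < k := by have := (τ ib).isLt; omega
  set l : Fin k := τ.symm ⟨(τ ia).val + 1, hlk⟩ with hldef
  have hτl : (τ l).val = (τ ia).val + 1 := by
    rw [hldef, Equiv.apply_symm_apply]
  have g1 : τ ia < τ l := Fin.lt_def.mpr (by omega)
  have g2 : τ l < τ ib := Fin.lt_def.mpr (by omega)
  have p1 := Fin.lt_def.mp ((hf ia l).mp g1)
  have p2 := Fin.lt_def.mp ((hf l ib).mp g2)
  omega

lemma p123_val : ∀ m : Fin 3, (p123 m).val = m.val := fun _ => rfl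

lemma p321_val : ∀ m : Fin 3, (p321 m).val = 2 - m.val := by
  intro m
  rw [p321, Equiv.ofBijective_apply]
  fin_cases m <;> rfl

lemma reroute {N k s b : ℕ} (π : Equiv.Perm (Fin (N+1))) (τ : Equiv.Perm (Fin k))
    (hs : s + 3 ≤ N + 1) (v : Fin 3 → ℕ)
    (hv : (∀ j : Fin 3, v j = b + j.val) ∨ (∀ j : Fin 3, v j = b + 2 - j.val))
    (hval : ∀ j : Fin 3, ∀ hj : s + j.val < N + 1, ((π ⟨s + j.val, hj⟩) : Fin (N+1)).val = v j)
    (hτ : Contains τ π) :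
    Contains τ (delP π ⟨s + 1, by omega⟩) ∨ HasIntervalIso τ p123 ∨ HasIntervalIso τ p321 := by
  classical
  obtain ⟨f, hf⟩ := hτ
  have hsq : s + 1 < N + 1 := by omega
  set q : Fin (N+1) := ⟨s + 1, hsq⟩ with hqdef
  set P0 : Fin (N+1) := ⟨s, by omega⟩ with hP0def
  set P2 : Fin (N+1) := ⟨s + 2, by omega⟩ with hP2def
  have e0 : ((0 : Fin 3) : ℕ) = 0 := rfl
  have e1 : ((1 : Fin 3) : ℕ) = 1 := rfl
  have e2 : ((2 : Fin 3) : ℕ) = 2 := rfl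
  have hπ0 : (π P0).val = v 0 := by
    have := hval 0 (by rw [e0]; omega)
    simpa [e0] using this
  have hπ1 : (π q).val = v 1 := by
    have := hval 1 (by rw [e1]; omega)
    simpa [e1] using this
  have hπ2 : (π P2).val = v 2 := by
    have := hval 2 (by rw [e2]; omega)
    simpa [e2] using this
  have hv012 : (v 0 + 1 = v 1 ∧ v 1 + 1 = v 2) ∨ (v 1 + 1 = v 0 ∧ v 2 + 1 = v 1) := by
    rcases hv with h | h
    · left
      have h0 := h 0; have h1 := h 1; have h2 := h 2
      rw [e0] at h0; rw [e1] at h1; rw [e2] at h2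
      omega
    · right
      have h0 := h 0; have h1 := h 1; have h2 := h 2
      rw [e0] at h0; rw [e1] at h1; rw [e2] at h2
      omega
  by_cases hex : ∃ i, f i = q
  swap
  · push_neg at hex
    exact Or.inl (contains_of_avoid π q f hf hex)
  obtain ⟨i2, hi2⟩ := hex
  by_cases h3 : (∃ i, f i = P0) ∧ (∃ i, f i = P2)
  swap
  · left
    rcases not_and_or.mp h3 with hA | hB
    · push_neg at hA
      refine reroute_one π f hf q P0 i2 hi2 hA ?_ ?_
      · intro x hxq hx0
        rcases x with ⟨xv, hxv⟩
        have hx1 : xv ≠ s + 1 := fun hc => hxq (Fin.ext hc)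
        have hx2 : xv ≠ s := fun hc => hx0 (Fin.ext hc)
        exact (by omega : xv < s + 1 ↔ xv < s)
      · rcases hv012 with ⟨ha', hb'⟩ | ⟨ha', hb'⟩
        · exact Or.inl (by omega)
        · exact Or.inr (by omega)
    · push_neg at hB
      refine reroute_one π f hf q P2 i2 hi2 hB ?_ ?_
      · intro x hxq hx0
        rcases x with ⟨xv, hxv⟩
        have hx1 : xv ≠ s + 1 := fun hc => hxq (Fin.ext hc)
        have hx2 : xv ≠ s + 2 := fun hc => hx0 (Fin.ext hc)
        exact (by omega : xv < s + 1 ↔ xv < s + 2)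
      · rcases hv012 with ⟨ha', hb'⟩ | ⟨ha', hb'⟩
        · exact Or.inr (by omega)
        · exact Or.inl (by omega)
  obtain ⟨⟨i1, hi1⟩, ⟨i3, hi3⟩⟩ := h3
  right
  -- positions are consecutive
  have hlt12 : i1 < i2 := f.lt_iff_lt.mp (by rw [hi1, hi2]; exact Fin.mk_lt_mk.mpr (by omega))
  have hlt23 : i2 < i3 := f.lt_iff_lt.mp (by rw [hi2, hi3]; exact Fin.mk_lt_mk.mpr (by omega))
  have h12v : (i2 : ℕ) = (i1 : ℕ) + 1 := by
    by_contra hc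
    have hl : (i1 : ℕ) + 1 < k := by have := i2.isLt; have := Fin.lt_def.mp hlt12; omega
    have h1 := Fin.lt_def.mp (f.strictMono (show i1 < (⟨(i1 : ℕ) + 1, hl⟩ : Fin k) from
      Fin.lt_def.mpr (by simp)))
    have h2 := Fin.lt_def.mp (f.strictMono (show (⟨(i1 : ℕ) + 1, hl⟩ : Fin k) < i2 from
      Fin.lt_def.mpr (by simp; have := Fin.lt_def.mp hlt12; omega)))
    rw [hi1] at h1
    rw [hi2] at h2
    simp only [hP0def, hqdef] at h1 h2
    omega
  have h23v : (i3 : ℕ) = (i2 : ℕ) + 1 := by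
    by_contra hc
    have hl : (i2 : ℕ) + 1 < k := by have := i3.isLt; have := Fin.lt_def.mp hlt23; omega
    have h1 := Fin.lt_def.mp (f.strictMono (show i2 < (⟨(i2 : ℕ) + 1, hl⟩ : Fin k) from
      Fin.lt_def.mpr (by simp)))
    have h2 := Fin.lt_def.mp (f.strictMono (show (⟨(i2 : ℕ) + 1, hl⟩ : Fin k) < i3 from
      Fin.lt_def.mpr (by simp; have := Fin.lt_def.mp hlt23; omega)))
    rw [hi2] at h1
    rw [hi3] at h2
    simp only [hP2def, hqdef] at h1 h2
    omega
  have hk3 : (i1 : ℕ) + 3 ≤ k := by have := i3.isLt; omega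
  have hv1 : (π (f i1)).val = v 0 := by rw [hi1, hπ0]
  have hv2 : (π (f i2)).val = v 1 := by rw [hi2, hπ1]
  have hv3 : (π (f i3)).val = v 2 := by rw [hi3, hπ2]
  rcases hv012 with ⟨ha, hb⟩ | ⟨ha, hb⟩
  · -- increasing: p123
    left
    have hc12 : (τ i2).val = (τ i1).val + 1 := consec π f hf i1 i2 (by omega)
    have hc23 : (τ i3).val = (τ i2).val + 1 := consec π f hf i2 i3 (by omega)
    refine ⟨(i1 : ℕ), (τ i1).val, by omega, ?_⟩
    intro j hj
    rw [p123_val]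
    have hj3 : (j : ℕ) = 0 ∨ (j : ℕ) = 1 ∨ (j : ℕ) = 2 := by have := j.isLt; omega
    rcases hj3 with hjv | hjv | hjv
    · have e : (⟨(i1:ℕ) + (j:ℕ), hj⟩ : Fin k) = i1 := by
        apply Fin.ext
        show (i1:ℕ) + (j:ℕ) = (i1:ℕ)
        omega
      rw [e]
      omega
    · have e : (⟨(i1:ℕ) + (j:ℕ), hj⟩ : Fin k) = i2 := by
        apply Fin.ext
        show (i1:ℕ) + (j:ℕ) = (i2:ℕ)
        omega
      rw [e]
      omega
    · have e : (⟨(i1:ℕ) + (j:ℕ), hj⟩ : Fin k) = i3 := by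
        apply Fin.ext
        show (i1:ℕ) + (j:ℕ) = (i3:ℕ)
        omega
      rw [e]
      omega
  · -- decreasing: p321
    right
    have hc12 : (τ i1).val = (τ i2).val + 1 := consec π f hf i2 i1 (by omega)
    have hc23 : (τ i2).val = (τ i3).val + 1 := consec π f hf i3 i2 (by omega)
    refine ⟨(i1 : ℕ), (τ i3).val, by omega, ?_⟩
    intro j hj
    rw [p321_val]
    have hj3 : (j : ℕ) = 0 ∨ (j : ℕ) = 1 ∨ (j : ℕ) = 2 := by have := j.isLt; omega
    rcases hj3 with hjv | hjv | hjv
    · have e : (⟨(i1:ℕ) + (j:ℕ), hj⟩ : Fin k) = i1 := by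
        apply Fin.ext
        show (i1:ℕ) + (j:ℕ) = (i1:ℕ)
        omega
      rw [e]
      omega
    · have e : (⟨(i1:ℕ) + (j:ℕ), hj⟩ : Fin k) = i2 := by
        apply Fin.ext
        show (i1:ℕ) + (j:ℕ) = (i2:ℕ)
        omega
      rw [e]
      omega
    · have e : (⟨(i1:ℕ) + (j:ℕ), hj⟩ : Fin k) = i3 := by
        apply Fin.ext
        show (i1:ℕ) + (j:ℕ) = (i3:ℕ)
        omega
      rw [e]
      omega
lemma mu_eq (k n : ℕ) (σ : Equiv.Perm (Fin k)) (π : Equiv.Perm (Fin n)) :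
    mu σ n π =
      if Contains σ π then
        if Contains π σ then 1
        else
          - ∑ m ∈ (Finset.range n).attach, ∑ τ : Equiv.Perm (Fin m.1),
              (if Contains σ τ ∧ Contains τ π then mu σ m.1 τ else 0)
      else 0 := by
  rw [mu]

lemma mu_triple_zero : ∀ n : ℕ, ∀ π : Equiv.Perm (Fin n),
    (HasIntervalIso π p123 ∨ HasIntervalIso π p321) → mu pone n π = 0 := by
  intro n
  induction n using Nat.strong_induction_on with
  | _ n IH =>
    intro π h
    have hdata : ∃ (s b : ℕ) (v : Fin 3 → ℕ), s + 3 ≤ n ∧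
        ((∀ j : Fin 3, v j = b + j.val) ∨ (∀ j : Fin 3, v j = b + 2 - j.val)) ∧
        ∀ j : Fin 3, ∀ hj : s + j.val < n, ((π ⟨s + j.val, hj⟩) : Fin n).val = v j := by
      rcases h with ⟨s, b, hs, hval⟩ | ⟨s, b, hs, hval⟩
      · exact ⟨s, b, fun j => b + j.val, hs, Or.inl (fun j => rfl),
          fun j hj => by rw [hval j hj, p123_val]⟩
      · refine ⟨s, b, fun j => b + 2 - j.val, hs, Or.inr (fun j => rfl), fun j hj => ?_⟩
        rw [hval j hj, p321_val]
        show b + (2 - (j : ℕ)) = b + 2 - (j : ℕ)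
        have := j.isLt
        omega
    obtain ⟨s, b, v, hs, hv, hval⟩ := hdata
    obtain ⟨N, rfl⟩ : ∃ N, n = N + 1 := ⟨n - 1, by omega⟩
    have hN : 2 ≤ N := by omega
    set π' : Equiv.Perm (Fin N) := delP π ⟨s + 1, by omega⟩ with hπ'def
    have hpoint : ∀ m, m < N + 1 → ∀ τ : Equiv.Perm (Fin m),
        (if Contains pone τ ∧ Contains τ π then mu pone m τ else 0)
        = (if Contains pone τ ∧ Contains τ π' then mu pone m τ else 0) := by
      intro m hm τ
      by_cases hTri : HasIntervalIso τ p123 ∨ HasIntervalIso τ p321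
      · rw [IH m hm τ hTri]
        simp
      · by_cases hc : Contains τ π
        · have hc' : Contains τ π' := by
            rcases reroute π τ hs v hv hval hc with h1 | h1 | h1
            · exact h1
            · exact absurd (Or.inl h1) hTri
            · exact absurd (Or.inr h1) hTri
          by_cases hp : Contains pone τ
          · rw [if_pos ⟨hp, hc⟩, if_pos ⟨hp, hc'⟩]
          · rw [if_neg (fun hh => hp hh.1), if_neg (fun hh => hp hh.1)]
        · have hc' : ¬ Contains τ π' := fun hh => hc (contains_delP hh)
          rw [if_neg (fun hh => hc hh.2), if_neg (fun hh => hc' hh.2)]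
    have hμ' : (∑ m ∈ Finset.range N, ∑ τ : Equiv.Perm (Fin m),
        if Contains pone τ ∧ Contains τ π' then mu pone m τ else 0) = - mu pone N π' := by
      have hh := mu_eq 1 N pone π'
      rw [if_pos (contains_pone (by omega) π'), if_neg (not_contains_pone (by omega) π')] at hh
      rw [Finset.sum_attach (Finset.range N) (fun m => ∑ τ : Equiv.Perm (Fin m),
        if Contains pone τ ∧ Contains τ π' then mu pone m τ else 0)] at hh
      omega
    have hlast : (∑ τ : Equiv.Perm (Fin N),
        if Contains pone τ ∧ Contains τ π' then mu pone N τ else 0) = mu pone N π' := by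
      rw [Finset.sum_eq_single π']
      · rw [if_pos ⟨contains_pone (by omega) π', contains_refl π'⟩]
      · intro τ _ hne
        rw [if_neg]
        rintro ⟨-, hcc⟩
        exact hne (contains_eq hcc)
      · intro hmem
        exact absurd (Finset.mem_univ π') hmem
    rw [mu_eq, if_pos (contains_pone (by omega) π), if_neg (not_contains_pone (by omega) π)]
    rw [Finset.sum_attach (Finset.range (N + 1)) (fun m => ∑ τ : Equiv.Perm (Fin m),
      if Contains pone τ ∧ Contains τ π then mu pone m τ else 0)]
    have h1 : ∀ m ∈ Finset.range (N + 1),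
        (∑ τ : Equiv.Perm (Fin m), if Contains pone τ ∧ Contains τ π then mu pone m τ else 0)
        = (∑ τ : Equiv.Perm (Fin m),
            if Contains pone τ ∧ Contains τ π' then mu pone m τ else 0) :=
      fun m hm => Finset.sum_congr rfl (fun τ _ => hpoint m (Finset.mem_range.mp hm) τ)
    rw [Finset.sum_congr rfl h1, Finset.sum_range_succ, hlast, hμ']
    simp

theorem triple_adjacency_mu_zero (n : ℕ) (π : Equiv.Perm (Fin n))
    (h : HasIntervalIso π p123 ∨ HasIntervalIso π p321) :
    mu pone n π = 0 :=
  mu_triple_zero n π h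
end

section
/- Every permutation of length four that has both an ascending interval of length two (up-adjacency) and a descending interval of length two (down-adjacency) is one of the eight symmetries of 1243, and each such permutation π satisfies μ(1,π) = 0. -/
open scoped Classical

lemma contains_iff' {k n : ℕ} (σ : Equiv.Perm (Fin k)) (π : Equiv.Perm (Fin n)) :
    Contains σ π ↔ ∃ f : Fin k → Fin n, (∀ i j : Fin k, i < j → f i < f j) ∧
      ∀ i j : Fin k, σ i < σ j ↔ π (f i) < π (f j) := by
  constructor
  · rintro ⟨f, hf⟩; exact ⟨f, fun i j h => f.strictMono h, hf⟩
  · rintro ⟨f, hm, hf⟩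
    exact ⟨OrderEmbedding.ofStrictMono f (fun i j h => hm i j h), hf⟩

def containsDec {k n : ℕ} (σ : Equiv.Perm (Fin k)) (π : Equiv.Perm (Fin n)) :
    Decidable (Contains σ π) := decidable_of_iff' _ (contains_iff' σ π)

attribute [local instance] containsDec

def muG {k : ℕ} (σ : Equiv.Perm (Fin k)) : ℕ → (m : ℕ) → Equiv.Perm (Fin m) → ℤ
  | 0, _, _ => 0
  | Nat.succ N, m, π =>
    if m = N then
      (if Contains σ π then
        if Contains π σ then 1
        else
          - ∑ m' ∈ (Finset.range m).attach, ∑ τ : Equiv.Perm (Fin m'.1),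
              (if Contains σ τ ∧ Contains τ π then muG σ N m'.1 τ else 0)
      else 0)
    else muG σ N m π

lemma muG_eq {k : ℕ} (σ : Equiv.Perm (Fin k)) :
    ∀ N m, m < N → ∀ π : Equiv.Perm (Fin m), muG σ N m π = mu σ m π := by
  intro N
  induction N with
  | zero => omega
  | succ N ih =>
    intro m hm π
    rw [muG]
    by_cases h : m = N
    · subst h
      rw [if_pos rfl, mu]
      by_cases h1 : Contains σ π
      · rw [if_pos h1, if_pos h1]
        by_cases h2 : Contains π σ
        · rw [if_pos h2, if_pos h2]
        · rw [if_neg h2, if_neg h2]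
          congr 1
          refine Finset.sum_congr rfl fun m' _ => Finset.sum_congr rfl fun τ _ => ?_
          by_cases h3 : Contains σ τ ∧ Contains τ π
          · rw [if_pos h3, if_pos h3]; exact ih m'.1 (Finset.mem_range.mp m'.2) τ
          · rw [if_neg h3, if_neg h3]
      · rw [if_neg h1, if_neg h1]
    · rw [if_neg h]; exact ih m (by omega) π

lemma up_ex (π : Equiv.Perm (Fin 4)) (hu : HasUpAdjacency π) :
    ∃ i : Fin 3, (π i.castSucc).val + 1 = (π i.succ).val := by
  obtain ⟨s, b, hs, h⟩ := hu
  have hj0 : s + ((0 : Fin 2) : ℕ) < 4 := by omega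
  have hj1 : s + ((1 : Fin 2) : ℕ) < 4 := by simp; omega
  have h0 := h 0 hj0
  have h1 := h 1 hj1
  have e0 : (p12 0).val = 0 := rfl
  have e1 : (p12 1).val = 1 := rfl
  refine ⟨⟨s, by omega⟩, ?_⟩
  have ec : Fin.castSucc (⟨s, by omega⟩ : Fin 3) = ⟨s + ((0 : Fin 2) : ℕ), hj0⟩ := by
    apply Fin.ext; simp
  have es : Fin.succ (⟨s, by omega⟩ : Fin 3) = ⟨s + ((1 : Fin 2) : ℕ), hj1⟩ := by
    apply Fin.ext; simp
  rw [ec, es, h0, h1, e0, e1]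

lemma down_ex (π : Equiv.Perm (Fin 4)) (hd : HasDownAdjacency π) :
    ∃ i : Fin 3, (π i.succ).val + 1 = (π i.castSucc).val := by
  obtain ⟨s, b, hs, h⟩ := hd
  have hj0 : s + ((0 : Fin 2) : ℕ) < 4 := by omega
  have hj1 : s + ((1 : Fin 2) : ℕ) < 4 := by simp; omega
  have h0 := h 0 hj0
  have h1 := h 1 hj1
  have e0 : (p21 0).val = 1 := by decide
  have e1 : (p21 1).val = 0 := by decide
  refine ⟨⟨s, by omega⟩, ?_⟩
  have ec : Fin.castSucc (⟨s, by omega⟩ : Fin 3) = ⟨s + ((0 : Fin 2) : ℕ), hj0⟩ := by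
    apply Fin.ext; simp
  have es : Fin.succ (⟨s, by omega⟩ : Fin 3) = ⟨s + ((1 : Fin 2) : ℕ), hj1⟩ := by
    apply Fin.ext; simp
  rw [ec, es, h0, h1, e0, e1]

lemma classify (π : Equiv.Perm (Fin 4))
    (h1 : ∃ i : Fin 3, (π i.castSucc).val + 1 = (π i.succ).val)
    (h2 : ∃ i : Fin 3, (π i.succ).val + 1 = (π i.castSucc).val) :
    π = p1243 ∨ π = revP p1243 ∨ π = complP p1243 ∨ π = revP (complP p1243) := by
  revert h1 h2
  revert π
  decide

theorem length_four_opposing (π : Equiv.Perm (Fin 4))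
    (hu : HasUpAdjacency π) (hd : HasDownAdjacency π) :
    π ∈ symmetries p1243 ∧ mu pone 4 π = 0 := by
  have hc := classify π (up_ex π hu) (down_ex π hd)
  constructor
  · rcases hc with h | h | h | h <;> subst h <;>
      simp [symmetries, Set.mem_insert_iff]
  · rw [← muG_eq pone 5 4 (by omega)]
    rcases hc with h | h | h | h <;> subst h <;> decide
end

section
/- Let σ be an adjacency-free permutation of length n, and let π = σ[α_1, …, α_n] be a proper inflation of σ (each α_i a nonempty permutation) in which every α_i belongs to {1, 12, 21}. Then the interval [σ, π] in the pattern-containment poset is isomorphic to a Boolean lattice of rank |π| − |σ|, and consequently μ(σ, π) = (−1)^{|π| − |σ|}. In particular, if μ(σ,π) = 0 for a proper inflation π of an adjacency-free σ, then some α_i is not in {1, 12, 21}. -/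
open scoped Classical

/-!
Write `π = σ[α]` with blocks of size one or two. Since `σ` has no adjacencies, an occurrence of
`σ` in `π` takes exactly one point from each block (two points of one block would form an
adjacency of `σ`). Hence every `τ ∈ [σ, π]` meets all blocks, and is `σ[α_T]`, where `T` is the
set of blocks it meets twice. The set `T` is determined by `τ`: an adjacency of `τ` lying across
two blocks would project to an adjacency of `σ`, so the adjacencies of `τ` are exactly the pairs
of points in a block of `T`, and their positions recover `T`. Thus `T ↦ σ[α_T]` is an order isomorphism from the
Boolean lattice on the blocks of size two onto `[σ, π]`, and the Möbius function of a Boolean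
lattice of rank `r` is `(-1) ^ r`.
-/

open Finset

section Containment

variable {a b c : ℕ} {x : Equiv.Perm (Fin a)} {y : Equiv.Perm (Fin b)} {z : Equiv.Perm (Fin c)}

lemma contains_refl_s7 (x : Equiv.Perm (Fin a)) : Contains x x :=
  ⟨(OrderIso.refl _).toOrderEmbedding, fun _ _ => Iff.rfl⟩

lemma Contains.trans (h₁ : Contains x y) (h₂ : Contains y z) : Contains x z := by
  obtain ⟨f, hf⟩ := h₁
  obtain ⟨g, hg⟩ := h₂
  exact ⟨f.trans g, fun i j => (hf i j).trans (hg (f i) (f j))⟩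

lemma Contains.length_le (h : Contains x y) : a ≤ b := by
  obtain ⟨f, -⟩ := h
  simpa using Fintype.card_le_of_injective f f.injective

lemma Contains.eq {x y : Equiv.Perm (Fin a)} (h : Contains x y) : x = y := by
  obtain ⟨f, hf⟩ := h
  have hf_id : ∀ i, f i = i := fun i => congrFun f.strictMono.eq_id i
  have hmono : StrictMono (y ∘ x.symm) := fun u v huv => by
    simpa [hf_id] using (hf (x.symm u) (x.symm v)).mp (by simpa using huv)
  ext i
  simpa using congrArg Fin.val (congrFun hmono.eq_id (x i)).symm

end Containment

namespace SContains

lemma refl (x : SigmaPerm) : SContains x x := contains_refl_s7 x.2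

lemma trans {x y z : SigmaPerm} (h₁ : SContains x y) (h₂ : SContains y z) : SContains x z :=
  Contains.trans h₁ h₂

lemma fst_le {x y : SigmaPerm} (h : SContains x y) : x.1 ≤ y.1 := Contains.length_le h

lemma eq_of_fst_eq {x y : SigmaPerm} (h : SContains x y) (hxy : x.1 = y.1) : x = y := by
  obtain ⟨a, x⟩ := x
  obtain ⟨b, y⟩ := y
  obtain rfl : a = b := hxy
  obtain rfl : x = y := Contains.eq h
  rfl

lemma antisymm {x y : SigmaPerm} (h₁ : SContains x y) (h₂ : SContains y x) : x = y :=
  h₁.eq_of_fst_eq (h₁.fst_le.antisymm h₂.fst_le)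

lemma fst_lt_of_ne {x y : SigmaPerm} (h : SContains x y) (hxy : x ≠ y) : x.1 < y.1 :=
  h.fst_le.lt_of_ne fun hfst => hxy (h.eq_of_fst_eq hfst)

end SContains

abbrev PatternInterval (σ π : SigmaPerm) : Type :=
  {τ : SigmaPerm // SContains σ τ ∧ SContains τ π}

lemma mu_eq_neg_sum {k N : ℕ} {σ : Equiv.Perm (Fin k)} {π : Equiv.Perm (Fin N)}
    (h : Contains σ π) (h' : ¬ Contains π σ) :
    mu σ N π = - ∑ τ ∈ ((range N).sigma fun m => (univ : Finset (Equiv.Perm (Fin m)))).filter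
      (fun τ => SContains ⟨k, σ⟩ τ ∧ SContains τ ⟨N, π⟩), mu σ τ.1 τ.2 := by
  rw [mu, if_pos h, if_neg h', sum_filter, sum_sigma,
    sum_attach (range N) fun m => ∑ τ : Equiv.Perm (Fin m),
      if Contains σ τ ∧ Contains τ π then mu σ m τ else 0]
  rfl

lemma sum_ssubsets_neg_one_pow_card {α : Type*} [DecidableEq α] {s : Finset α} (hs : s ≠ ∅) :
    ∑ t ∈ s.ssubsets, (-1 : ℤ) ^ t.card = - (-1) ^ s.card := by
  rw [ssubsets, sum_erase_eq_sub (mem_powerset_self s), sum_powerset_neg_one_pow_card, if_neg hs,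
    zero_sub]

lemma orderIso_eq_empty_iff {k N r : ℕ} {σ : Equiv.Perm (Fin k)} {π : Equiv.Perm (Fin N)}
    (e : PatternInterval ⟨k, σ⟩ ⟨N, π⟩ ≃ Finset (Fin r))
    (he : ∀ x y, SContains x.1 y.1 ↔ e x ⊆ e y) (x) : e x = ∅ ↔ x.1 = ⟨k, σ⟩ := by
  constructor
  · intro hx
    have hbot : SContains x.1 ⟨k, σ⟩ :=
      (he x ⟨⟨k, σ⟩, SContains.refl _, x.2.1.trans x.2.2⟩).mpr (hx ▸ empty_subset _)
    exact hbot.antisymm x.2.1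
  · intro hx
    simpa using (he x (e.symm ∅)).mp (by rw [hx]; exact (e.symm ∅).2.1)

lemma mu_eq_neg_one_pow_card_of_orderIso {k N r : ℕ} {σ : Equiv.Perm (Fin k)}
    {π : Equiv.Perm (Fin N)}
    (e : PatternInterval ⟨k, σ⟩ ⟨N, π⟩ ≃ Finset (Fin r))
    (he : ∀ x y, SContains x.1 y.1 ↔ e x ⊆ e y) (x) : mu σ x.1.1 x.1.2 = (-1) ^ #(e x) := by
  suffices ∀ m x, x.1.1 = m → mu σ x.1.1 x.1.2 = (-1) ^ #(e x) from this _ x rfl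
  intro m
  induction m using Nat.strong_induction_on with
  | _ m ih =>
  rintro x rfl
  by_cases hx : SContains x.1 ⟨k, σ⟩
  · have hσx : Contains σ x.1.2 := x.2.1
    have hxσ : Contains x.1.2 σ := hx
    rw [mu, if_pos hσx, if_pos hxσ, (orderIso_eq_empty_iff e he x).mpr (hx.antisymm x.2.1)]
    rfl
  have hne : e x ≠ ∅ := fun h => hx (by rw [(orderIso_eq_empty_iff e he x).mp h]; exact .refl _)
  have hlt : ∀ U ∈ (e x).ssubsets, (e.symm U).1.1 < x.1.1 := by
    intro U hU
    rw [mem_ssubsets, ← e.apply_symm_apply U] at hU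
    exact ((he _ _).mpr hU.1).fst_lt_of_ne fun h => hU.ne (congrArg e (Subtype.ext h))
  rw [mu_eq_neg_sum (σ := σ) (π := x.1.2) x.2.1 hx, ← neg_neg ((-1 : ℤ) ^ #(e x)),
    ← sum_ssubsets_neg_one_pow_card hne, neg_inj]
  symm
  refine sum_bij (fun U _ => (e.symm U).1) (fun U hU => ?_) (fun U _ V _ h => ?_) (fun τ hτ => ?_)
    (fun U hU => ?_)
  · have hle : SContains (e.symm U).1 x.1 := (he _ _).mpr (by simpa using (mem_ssubsets.mp hU).1)
    simpa using ⟨hlt U hU, (e.symm U).2.1, hle⟩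
  · simpa using e.symm.injective (Subtype.ext h)
  · simp only [mem_filter, mem_sigma, mem_range, mem_univ, and_true] at hτ
    let y : PatternInterval ⟨k, σ⟩ ⟨N, π⟩ :=
      ⟨τ, hτ.2.1, hτ.2.2.trans x.2.2⟩
    refine ⟨e y, mem_ssubsets.mpr <|
      Finset.ssubset_iff_subset_ne.mpr ⟨(he y x).mp hτ.2.2, ?_⟩, by simp [y]⟩
    exact fun h => hτ.1.ne (congrArg (fun z => z.1.1) (e.injective h))
  · rw [ih _ (hlt U hU) _ rfl, e.apply_symm_apply]

theorem mu_eq_neg_one_pow_of_orderIso {k N r : ℕ} {σ : Equiv.Perm (Fin k)}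
    {π : Equiv.Perm (Fin N)}
    (e : PatternInterval ⟨k, σ⟩ ⟨N, π⟩ ≃ Finset (Fin r))
    (he : ∀ x y, SContains x.1 y.1 ↔ e x ⊆ e y) : mu σ N π = (-1) ^ r := by
  let top : PatternInterval ⟨k, σ⟩ ⟨N, π⟩ :=
    ⟨⟨N, π⟩, (e.symm ∅).2.1.trans (e.symm ∅).2.2, SContains.refl _⟩
  have e_top : e top = univ := univ_subset_iff.mp <| by
    simpa using (he (e.symm univ) top).mp (e.symm univ).2.2
  rw [mu_eq_neg_one_pow_card_of_orderIso e he top, e_top, card_univ, Fintype.card_fin]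

lemma exists_equiv_finset_of_surjective {α β : Type*} (R : α → α → Prop)
    (f : Finset β → α) (hf : Function.Surjective f) (hR : ∀ A B, R (f A) (f B) ↔ A ⊆ B) :
    ∃ e : α ≃ Finset β, ∀ x y, R x y ↔ e x ⊆ e y := by
  have hinj : Function.Injective f := fun A B hAB =>
    ((hR A B).mp (hAB ▸ (hR A A).mpr subset_rfl)).antisymm
      ((hR B A).mp (hAB ▸ (hR A A).mpr subset_rfl))
  have he : ∀ A, (Equiv.ofBijective f ⟨hinj, hf⟩).symm (f A) = A :=
    (Equiv.ofBijective f ⟨hinj, hf⟩).symm_apply_apply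
  refine ⟨(Equiv.ofBijective f ⟨hinj, hf⟩).symm, fun x y => ?_⟩
  obtain ⟨A, rfl⟩ := hf x
  obtain ⟨B, rfl⟩ := hf y
  rw [he, he]
  exact hR A B

section Occurrence

variable {j k N : ℕ} {ρ : Equiv.Perm (Fin j)} {τ : Equiv.Perm (Fin k)} {π : Equiv.Perm (Fin N)}

def IsOccurrence (τ : Equiv.Perm (Fin k)) (π : Equiv.Perm (Fin N)) (h : Fin k → Fin N) : Prop :=
  StrictMono h ∧ ∀ a c, τ a < τ c ↔ π (h a) < π (h c)

lemma IsOccurrence.contains {h : Fin k → Fin N} (hh : IsOccurrence τ π h) : Contains τ π :=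
  ⟨OrderEmbedding.ofStrictMono h hh.1, hh.2⟩

lemma Contains.exists_isOccurrence (hτπ : Contains τ π) : ∃ h, IsOccurrence τ π h :=
  let ⟨f, hf⟩ := hτπ
  ⟨f, f.strictMono, hf⟩

lemma IsOccurrence.comp {g : Fin j → Fin k} {h : Fin k → Fin N} (hh : IsOccurrence τ π h)
    (hg : IsOccurrence ρ τ g) : IsOccurrence ρ π (h ∘ g) :=
  ⟨hh.1.comp hg.1, fun a c => (hg.2 a c).trans (hh.2 (g a) (g c))⟩

lemma IsOccurrence.covBy_of_covBy {h : Fin k → Fin N} (hh : IsOccurrence τ π h) {a c : Fin k}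
    (hac : π (h a) ⋖ π (h c)) : τ a ⋖ τ c := by
  refine ⟨(hh.2 a c).mpr hac.lt, fun x hax hxc => ?_⟩
  obtain ⟨b, rfl⟩ := τ.surjective x
  exact hac.2 ((hh.2 a b).mp hax) ((hh.2 b c).mp hxc)

lemma IsOccurrence.not_between_of_covBy {h : Fin k → Fin N} (hh : IsOccurrence τ π h)
    {a c : Fin k} (hac : τ a ⋖ τ c) (b : Fin k) :
    ¬ (π (h a) < π (h b) ∧ π (h b) < π (h c)) :=
  fun hb => hac.2 ((hh.2 a b).mpr hb.1) ((hh.2 b c).mpr hb.2)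

noncomputable def patternOn (π : Equiv.Perm (Fin N)) (S : Finset (Fin N)) :
    Equiv.Perm (Fin S.card) :=
  let rank := ((S.image π).orderIsoOfFin (card_image_of_injective S π.injective)).symm
  Equiv.ofBijective
    (fun a => rank ⟨π (S.orderEmbOfFin rfl a), mem_image_of_mem π (by simp)⟩)
    (Finite.injective_iff_bijective.mp fun a c hac => by simpa using rank.injective hac)

lemma isOccurrence_patternOn (π : Equiv.Perm (Fin N)) (S : Finset (Fin N)) :
    IsOccurrence (patternOn π S) π (S.orderEmbOfFin rfl) := by
  refine ⟨(S.orderEmbOfFin rfl).strictMono, fun a c => ?_⟩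
  simp only [patternOn, Equiv.ofBijective_apply, OrderIso.lt_iff_lt, Subtype.mk_lt_mk]

noncomputable def adjacencies (τ : Equiv.Perm (Fin k)) : Finset (Fin k) :=
  univ.filter fun p => ∃ q, p ⋖ q ∧ (τ p ⋖ τ q ∨ τ q ⋖ τ p)

end Occurrence

lemma AdjacencyFree.not_covBy {n : ℕ} {σ : Equiv.Perm (Fin n)} (hσ : AdjacencyFree σ)
    {a c : Fin n} (hac : a ⋖ c) : ¬ (σ a ⋖ σ c ∨ σ c ⋖ σ a) := by
  simp only [Fin.covBy_iff, Nat.covBy_iff_add_one_eq] at hac ⊢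
  rintro (hup | hdown)
  · refine hσ.1 ⟨a, σ a, by omega, fun t ht => ?_⟩
    fin_cases t
    · simp [p12]
    · simp [p12, ← hup, show a.val + 1 = c from hac]
  · refine hσ.2 ⟨a, σ c, by omega, fun t ht => ?_⟩
    fin_cases t
    · simp [p21, ← hdown]
    · simp [p21, show a.val + 1 = c from hac]

/-- The position of `i` once every element of `s` has been doubled. -/
def expandedPos {n : ℕ} (s : Finset (Fin n)) (i : Fin n) : ℕ := i + #{j ∈ s | j < i}

lemma expandedPos_strictMono {n : ℕ} (s : Finset (Fin n)) : StrictMono (expandedPos s) :=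
  fun i i' hii' => by
    have : #{j ∈ s | j < i} ≤ #{j ∈ s | j < i'} :=
      card_le_card fun j => by
        simp only [mem_filter]
        exact fun ⟨hj, hji⟩ => ⟨hj, hji.trans hii'⟩
    exact Nat.add_lt_add_of_lt_of_le hii' this

lemma eq_of_image_expandedPos_eq {n : ℕ} {s t : Finset (Fin n)}
    (hst : s.image (expandedPos s) = t.image (expandedPos t)) : s = t := by
  have key : ∀ {s t : Finset (Fin n)}, s.image (expandedPos s) = t.image (expandedPos t) →
      ∀ i ∈ s, (∀ j < i, j ∈ s ↔ j ∈ t) → i ∈ t := by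
    intro s t hst i hi hbelow
    have hpos : expandedPos s i = expandedPos t i := by
      simp only [expandedPos, add_right_inj]
      congr 1
      ext j
      simp only [mem_filter]
      exact ⟨fun ⟨hj, hji⟩ => ⟨(hbelow j hji).mp hj, hji⟩,
        fun ⟨hj, hji⟩ => ⟨(hbelow j hji).mpr hj, hji⟩⟩
    have hmem : expandedPos t i ∈ t.image (expandedPos t) := by
      rw [← hst, ← hpos]
      exact mem_image_of_mem _ hi
    obtain ⟨j, hj, hji⟩ := mem_image.mp hmem
    rwa [← (expandedPos_strictMono t).injective hji]
  by_contra hne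
  have hdiff : (symmDiff s t).Nonempty := symmDiff_nonempty.mpr hne
  have hi := min'_mem _ hdiff
  have hbelow : ∀ j < (symmDiff s t).min' hdiff, j ∈ s ↔ j ∈ t := fun j hji => by
    by_contra h
    exact (min'_le _ j (mem_symmDiff.mpr (by tauto))).not_gt hji
  rcases mem_symmDiff.mp hi with ⟨his, hit⟩ | ⟨hit, his⟩
  · exact hit (key hst _ his hbelow)
  · exact his (key hst.symm _ hit fun j hj => (hbelow j hj).symm)

section BlockStart

variable {n : ℕ} (m : Fin n → ℕ)

def blockStart (i : Fin n) : ℕ := ∑ j ∈ Iio i, m j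

lemma blockStart_add_eq (i : Fin n) : blockStart m i + m i = ∑ j ∈ Iic i, m j := by
  rw [blockStart, Iic_eq_cons_Iio, sum_cons, add_comm]

variable {m}

lemma blockStart_add_le {i i' : Fin n} (h : i < i') : blockStart m i + m i ≤ blockStart m i' := by
  rw [blockStart_add_eq]
  exact sum_le_sum_of_subset fun j hj => mem_Iio.mpr ((mem_Iic.mp hj).trans_lt h)

lemma blockStart_add_le_sum (i : Fin n) : blockStart m i + m i ≤ ∑ j, m j := by
  rw [blockStart_add_eq]
  exact sum_le_sum_of_subset (subset_univ _)

lemma blockStart_le {i i' : Fin n} (h : i ≤ i') : blockStart m i ≤ blockStart m i' :=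
  sum_le_sum_of_subset (Iio_subset_Iio h)

lemma exists_blockStart_le_lt {p : ℕ} (hp : p < ∑ j, m j) :
    ∃ i, blockStart m i ≤ p ∧ p < blockStart m i + m i := by
  have hn : 0 < n := by
    by_contra h
    obtain rfl : n = 0 := by omega
    simp at hp
  have hne : (univ.filter fun i => blockStart m i ≤ p).Nonempty :=
    ⟨⟨0, hn⟩, mem_filter.mpr ⟨mem_univ _, by
      have : Iio (⟨0, hn⟩ : Fin n) = ∅ := by ext j; simp [Fin.lt_def]
      rw [blockStart, this, sum_empty]
      exact p.zero_le⟩⟩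
  set i := (univ.filter fun i => blockStart m i ≤ p).max' hne
  refine ⟨i, (mem_filter.mp (max'_mem _ hne)).2, ?_⟩
  by_contra! hle
  by_cases hlast : i.val + 1 < n
  · have hsucc : blockStart m ⟨i.val + 1, hlast⟩ = blockStart m i + m i := by
      rw [blockStart_add_eq, blockStart]
      congr 1
      ext j
      simp only [mem_Iio, mem_Iic, Fin.lt_def, Fin.le_def]
      omega
    have hmem : (⟨i.val + 1, hlast⟩ : Fin n) ∈ univ.filter fun i => blockStart m i ≤ p :=
      mem_filter.mpr ⟨mem_univ _, hsucc ▸ hle⟩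
    exact absurd (le_max' _ _ hmem) (by simp [Fin.le_def, i])
  · have hall : Iic i = univ := by
      ext j
      simp only [mem_Iic, mem_univ, iff_true, Fin.le_def]
      omega
    rw [blockStart_add_eq, hall] at hle
    omega

end BlockStart

/-- A presentation of `π` as an inflation of `σ` whose blocks have size one or two: block `i`
occupies the positions `[blockStart size i, blockStart size i + size i)` and the values
`[base i, base i + size i)`. -/
structure ShortInflation {n N : ℕ} (σ : Equiv.Perm (Fin n)) (π : Equiv.Perm (Fin N)) where
  size : Fin n → ℕ
  base : Fin n → ℕ
  size_pos : ∀ i, 0 < size i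
  size_le_two : ∀ i, size i ≤ 2
  card_eq : N = ∑ i, size i
  val_mem : ∀ i, ∀ j < size i, ∀ hj : blockStart size i + j < N,
    base i ≤ (π ⟨blockStart size i + j, hj⟩).val ∧
      (π ⟨blockStart size i + j, hj⟩).val < base i + size i
  lt_iff_base_lt : ∀ i i', σ i < σ i' ↔ base i < base i'

lemma IsInflation.nonempty_shortInflation {n N : ℕ} {σ : Equiv.Perm (Fin n)}
    {α : Fin n → SigmaPerm} {π : Equiv.Perm (Fin N)} (hinf : IsInflation σ α π)
    (hα : ∀ i, α i = ⟨1, pone⟩ ∨ α i = ⟨2, p12⟩ ∨ α i = ⟨2, p21⟩) :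
    Nonempty (ShortInflation σ π) := by
  obtain ⟨hpos, hN, b, hb, hord⟩ := hinf
  simp only [filter_gt_eq_Iio] at hb
  refine ⟨⟨fun i => (α i).1, b, hpos, fun i => ?_, hN, fun i j hj hjN => ?_, hord⟩⟩
  · rcases hα i with h | h | h <;> simp [h]
  · have hv : (π ⟨blockStart (fun i => (α i).1) i + j, hjN⟩).val =
        b i + ((α i).2 ⟨j, hj⟩).val := hb i ⟨j, hj⟩ hjN
    have := ((α i).2 ⟨j, hj⟩).isLt
    omega

namespace ShortInflation

variable {n N k k' : ℕ} {σ : Equiv.Perm (Fin n)} {π : Equiv.Perm (Fin N)}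
variable (B : ShortInflation σ π)
variable {τ : Equiv.Perm (Fin k)} {h : Fin k → Fin N}

lemma blockStart_add_size_le_card (i : Fin n) : blockStart B.size i + B.size i ≤ N :=
  (blockStart_add_le_sum i).trans_eq B.card_eq.symm

def startPos (i : Fin n) : Fin N :=
  ⟨blockStart B.size i, by have := B.blockStart_add_size_le_card i; have := B.size_pos i; omega⟩

lemma exists_block (p : Fin N) :
    ∃ i, blockStart B.size i ≤ p ∧ p.val < blockStart B.size i + B.size i :=
  exists_blockStart_le_lt (B.card_eq ▸ p.isLt)

noncomputable def blockOf (p : Fin N) : Fin n := (B.exists_block p).choose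

lemma blockOf_spec (p : Fin N) :
    blockStart B.size (B.blockOf p) ≤ p ∧
      p.val < blockStart B.size (B.blockOf p) + B.size (B.blockOf p) :=
  (B.exists_block p).choose_spec

lemma blockOf_eq {p : Fin N} {i : Fin n} (h₁ : blockStart B.size i ≤ p)
    (h₂ : p.val < blockStart B.size i + B.size i) : B.blockOf p = i := by
  have hp := B.blockOf_spec p
  rcases lt_trichotomy (B.blockOf p) i with h | h | h
  · have := blockStart_add_le (m := B.size) h; omega
  · exact h
  · have := blockStart_add_le (m := B.size) h; omega

lemma blockOf_startPos (i : Fin n) : B.blockOf (B.startPos i) = i :=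
  B.blockOf_eq le_rfl (by simp [startPos, B.size_pos i])

lemma blockOf_mono : Monotone B.blockOf := fun p q hpq => by
  by_contra! h
  have := blockStart_add_le (m := B.size) h
  have := B.blockOf_spec p
  have := B.blockOf_spec q
  have : p.val ≤ q.val := hpq
  omega

lemma lt_blockStart_iff {q : Fin N} {i : Fin n} :
    q.val < blockStart B.size i ↔ B.blockOf q < i := by
  have hq := B.blockOf_spec q
  constructor
  · intro h
    by_contra! hi
    have := blockStart_le (m := B.size) hi
    omega
  · intro h
    have := blockStart_add_le (m := B.size) h
    omega

lemma mem_window (p : Fin N) :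
    B.base (B.blockOf p) ≤ π p ∧ (π p).val < B.base (B.blockOf p) + B.size (B.blockOf p) := by
  have hp := B.blockOf_spec p
  have := B.val_mem (B.blockOf p) (p - blockStart B.size (B.blockOf p)) (by omega) (by omega)
  simpa [Nat.add_sub_cancel' hp.1] using this

lemma val_startPos_ne_val_succ {i : Fin n} (h : blockStart B.size i + 1 < N) :
    (π (B.startPos i)).val ≠ (π ⟨blockStart B.size i + 1, h⟩).val := fun he => by
  simpa [startPos] using π.injective (Fin.ext he)

lemma exists_blockOf_eq_val_eq {i : Fin n} {v : ℕ} (h₁ : B.base i ≤ v)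
    (h₂ : v < B.base i + B.size i) : ∃ p, B.blockOf p = i ∧ (π p).val = v := by
  have hN := B.blockStart_add_size_le_card i
  have h0 := B.val_mem i 0 (B.size_pos i) (by have := B.size_pos i; omega)
  by_cases hv : (π (B.startPos i)).val = v
  · exact ⟨_, B.blockOf_startPos i, hv⟩
  have hsize : B.size i = 2 := by have := B.size_le_two i; simp [startPos] at hv h0; omega
  have h1 := B.val_mem i 1 (by omega) (by omega)
  refine ⟨⟨blockStart B.size i + 1, by omega⟩, B.blockOf_eq (by simp) (by simp; omega), ?_⟩
  have := B.val_startPos_ne_val_succ (i := i) (by omega)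
  simp [startPos] at hv h0 this
  omega

lemma eq_of_mem_window {i i' : Fin n} {v : ℕ} (h₁ : B.base i ≤ v)
    (h₂ : v < B.base i + B.size i) (h₁' : B.base i' ≤ v) (h₂' : v < B.base i' + B.size i') :
    i = i' := by
  obtain ⟨p, rfl, hp⟩ := B.exists_blockOf_eq_val_eq h₁ h₂
  obtain ⟨q, rfl, hq⟩ := B.exists_blockOf_eq_val_eq h₁' h₂'
  rw [π.injective (Fin.ext (hp.trans hq.symm))]

lemma base_add_size_le {i i' : Fin n} (h : B.base i < B.base i') :
    B.base i + B.size i ≤ B.base i' := by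
  by_contra! hlt
  have := B.eq_of_mem_window h.le hlt le_rfl (by have := B.size_pos i'; omega)
  exact h.ne (congrArg B.base this)

lemma val_lt_iff {p q : Fin N} (h : B.blockOf p ≠ B.blockOf q) :
    π p < π q ↔ σ (B.blockOf p) < σ (B.blockOf q) := by
  rw [B.lt_iff_base_lt, Fin.lt_def]
  have hp := B.mem_window p
  have hq := B.mem_window q
  rcases lt_trichotomy (B.base (B.blockOf p)) (B.base (B.blockOf q)) with hb | hb | hb
  · have := B.base_add_size_le hb; omega
  · exact (h (B.eq_of_mem_window le_rfl (by have := B.size_pos (B.blockOf q); omega)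
      hb.le (by have := B.size_pos (B.blockOf p); omega)).symm).elim
  · have := B.base_add_size_le hb; omega

lemma covBy_or_covBy_of_size_eq_two {i : Fin n} (hi : B.size i = 2)
    (h : blockStart B.size i + 1 < N) :
    π (B.startPos i) ⋖ π ⟨blockStart B.size i + 1, h⟩ ∨
      π ⟨blockStart B.size i + 1, h⟩ ⋖ π (B.startPos i) := by
  have h0 := B.val_mem i 0 (by omega) (by omega)
  have h1 := B.val_mem i 1 (by omega) h
  have := B.val_startPos_ne_val_succ h
  simp only [Fin.covBy_iff, Nat.covBy_iff_add_one_eq, startPos, add_zero] at h0 h1 this ⊢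
  omega

def MeetsAllBlocks (h : Fin k → Fin N) : Prop := ∀ i, ∃ a, B.blockOf (h a) = i

noncomputable def doubledBy (h : Fin k → Fin N) : Finset (Fin n) :=
  univ.filter fun i => B.size i = 2 ∧ (∃ a, (h a).val = blockStart B.size i) ∧
    ∃ a, (h a).val = blockStart B.size i + 1

lemma mem_doubledBy {i : Fin n} :
    i ∈ B.doubledBy h ↔ B.size i = 2 ∧ (∃ a, (h a).val = blockStart B.size i) ∧
      ∃ a, (h a).val = blockStart B.size i + 1 := by
  simp [doubledBy]

lemma val_eq_of_blockOf_eq {p : Fin N} {i : Fin n} (hp : B.blockOf p = i) :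
    p.val = blockStart B.size i ∨ (B.size i = 2 ∧ p.val = blockStart B.size i + 1) := by
  have := B.blockOf_spec p
  have := B.size_le_two i
  subst hp
  omega

lemma val_eq_of_blockOf_eq_of_lt {p q : Fin N} (hpq : p < q) (hblk : B.blockOf p = B.blockOf q) :
    B.size (B.blockOf p) = 2 ∧ p.val = blockStart B.size (B.blockOf p) ∧
      q.val = blockStart B.size (B.blockOf p) + 1 := by
  have hp := B.val_eq_of_blockOf_eq (p := p) rfl
  have hq := B.val_eq_of_blockOf_eq hblk.symm
  have : p.val < q.val := hpq
  omega

lemma mem_doubledBy_of_blockOf_eq (hinj : Function.Injective h) {a c : Fin k} (hac : a ≠ c)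
    (hblk : B.blockOf (h a) = B.blockOf (h c)) : B.blockOf (h a) ∈ B.doubledBy h := by
  rcases (hinj.ne hac).lt_or_gt with hlt | hlt
  · obtain ⟨h2, ha, hc⟩ := B.val_eq_of_blockOf_eq_of_lt hlt hblk
    exact B.mem_doubledBy.mpr ⟨h2, ⟨a, ha⟩, c, hc⟩
  · obtain ⟨h2, hc, ha⟩ := B.val_eq_of_blockOf_eq_of_lt hlt hblk.symm
    rw [hblk]
    exact B.mem_doubledBy.mpr ⟨h2, ⟨c, hc⟩, a, ha⟩

lemma lt_iff_blockOf_lt {p q : Fin N} (hpq : B.blockOf p ≠ B.blockOf q) :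
    p < q ↔ B.blockOf p < B.blockOf q :=
  ⟨fun h => (B.blockOf_mono h.le).lt_of_ne hpq, B.blockOf_mono.reflect_lt⟩

lemma covBy_of_blockOf_eq (hh : IsOccurrence τ π h) {a c : Fin k} (hac : a < c)
    (hblk : B.blockOf (h a) = B.blockOf (h c)) : a ⋖ c ∧ (τ a ⋖ τ c ∨ τ c ⋖ τ a) := by
  obtain ⟨h2, ha, hc⟩ := B.val_eq_of_blockOf_eq_of_lt (hh.1 hac) hblk
  have hN : blockStart B.size (B.blockOf (h a)) + 1 < N := by omega
  have hpa : B.startPos (B.blockOf (h a)) = h a := Fin.ext ha.symm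
  have hpc : (⟨_, hN⟩ : Fin N) = h c := Fin.ext hc.symm
  refine ⟨CovBy.of_image (OrderEmbedding.ofStrictMono h hh.1) ?_, ?_⟩
  · simp only [OrderEmbedding.coe_ofStrictMono, Fin.covBy_iff, Nat.covBy_iff_add_one_eq]
    omega
  · have := B.covBy_or_covBy_of_size_eq_two h2 hN
    rw [hpa, hpc] at this
    exact this.imp hh.covBy_of_covBy hh.covBy_of_covBy

lemma card_filter_blockOf_eq (hinj : Function.Injective h) (hmeet : B.MeetsAllBlocks h)
    (i : Fin n) : #{a | B.blockOf (h a) = i} = 1 + if i ∈ B.doubledBy h then 1 else 0 := by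
  obtain ⟨a, ha⟩ := hmeet i
  split_ifs with hi
  · obtain ⟨hsize, ⟨a₁, ha₁⟩, a₂, ha₂⟩ := B.mem_doubledBy.mp hi
    have hblk₁ : B.blockOf (h a₁) = i := B.blockOf_eq ha₁.ge (by omega)
    have hblk₂ : B.blockOf (h a₂) = i := B.blockOf_eq (by omega) (by omega)
    rw [show ({a | B.blockOf (h a) = i} : Finset (Fin k)) = {a₁, a₂} from ?_,
      card_pair fun he => by rw [he] at ha₁; omega]
    ext c
    simp only [mem_filter, mem_univ, true_and, mem_insert, mem_singleton]
    refine ⟨fun hc => ?_, by rintro (rfl | rfl) <;> assumption⟩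
    rcases B.val_eq_of_blockOf_eq hc with hv | hv
    · exact .inl (hinj (Fin.ext (hv.trans ha₁.symm)))
    · exact .inr (hinj (Fin.ext (hv.2.trans ha₂.symm)))
  · rw [show ({a | B.blockOf (h a) = i} : Finset (Fin k)) = {a} from ?_, card_singleton]
    ext c
    simp only [mem_filter, mem_univ, true_and, mem_singleton]
    refine ⟨fun hc => ?_, fun hc => hc ▸ ha⟩
    by_contra hca
    exact hi (hc ▸ B.mem_doubledBy_of_blockOf_eq hinj hca (hc.trans ha.symm))

lemma length_eq (hinj : Function.Injective h) (hmeet : B.MeetsAllBlocks h) :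
    k = n + #(B.doubledBy h) := by
  have hfib := card_eq_sum_card_fiberwise (s := univ) (t := univ) (f := fun a => B.blockOf (h a))
    fun a _ => mem_univ _
  simp only [card_univ, Fintype.card_fin] at hfib
  refine hfib.trans ?_
  rw [sum_congr rfl fun i _ => B.card_filter_blockOf_eq hinj hmeet i, sum_add_distrib,
    ← sum_filter, sum_const, smul_eq_mul, mul_one, filter_mem_eq_inter, univ_inter]
  simp

lemma isOccurrence_startPos : IsOccurrence σ π B.startPos := by
  refine ⟨fun i i' hii' => ?_, fun i i' => ?_⟩
  · have := blockStart_add_le (m := B.size) hii'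
    have := B.size_pos i
    simp only [startPos, Fin.mk_lt_mk]
    omega
  · by_cases hii' : i = i'
    · simp [hii']
    · rw [B.val_lt_iff (by rwa [B.blockOf_startPos, B.blockOf_startPos]), B.blockOf_startPos,
        B.blockOf_startPos]

lemma meetsAllBlocks_startPos : B.MeetsAllBlocks B.startPos :=
  fun i => ⟨i, B.blockOf_startPos i⟩

lemma doubledBy_startPos : B.doubledBy B.startPos = ∅ := by
  have := B.length_eq B.isOccurrence_startPos.1.injective B.meetsAllBlocks_startPos
  exact card_eq_zero.mp (by omega)

lemma blockOf_apply_eq_self (hσ : AdjacencyFree σ) {g : Fin n → Fin N}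
    (hg : IsOccurrence σ π g) (i : Fin n) : B.blockOf (g i) = i := by
  have hinj : Function.Injective (B.blockOf ∘ g) := by
    intro a c hac
    by_contra hne
    rcases Ne.lt_or_gt hne with hlt | hlt
    · obtain ⟨hcov, hval⟩ := B.covBy_of_blockOf_eq hg hlt hac
      exact hσ.not_covBy hcov hval
    · obtain ⟨hcov, hval⟩ := B.covBy_of_blockOf_eq hg hlt hac.symm
      exact hσ.not_covBy hcov hval
  exact congrFun ((B.blockOf_mono.comp hg.1.monotone).strictMono_of_injective hinj).eq_id i

lemma meetsAllBlocks_of_contains (hσ : AdjacencyFree σ) (hh : IsOccurrence τ π h)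
    (hστ : Contains σ τ) : B.MeetsAllBlocks h := by
  obtain ⟨g, hg⟩ := hστ.exists_isOccurrence
  exact fun i => ⟨g i, B.blockOf_apply_eq_self hσ (hh.comp hg) i⟩

lemma contains_of_forall_blockOf_eq {τ' : Equiv.Perm (Fin k')} {h' : Fin k' → Fin N}
    (hh : IsOccurrence τ π h) (hh' : IsOccurrence τ' π h') (φ : Fin k → Fin k')
    (hblk : ∀ a, B.blockOf (h' (φ a)) = B.blockOf (h a))
    (heq : ∀ a, B.blockOf (h a) ∈ B.doubledBy h → h' (φ a) = h a) : Contains τ τ' := by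
  have hcmp : ∀ a c, (h a < h c ↔ h' (φ a) < h' (φ c)) ∧
      (π (h a) < π (h c) ↔ π (h' (φ a)) < π (h' (φ c))) := by
    intro a c
    by_cases hac : a = c
    · simp [hac]
    by_cases hac' : B.blockOf (h a) = B.blockOf (h c)
    · have hmem := B.mem_doubledBy_of_blockOf_eq hh.1.injective hac hac'
      rw [heq a hmem, heq c (hac' ▸ hmem)]
      exact ⟨Iff.rfl, Iff.rfl⟩
    · have hne : B.blockOf (h' (φ a)) ≠ B.blockOf (h' (φ c)) := by rwa [hblk, hblk]
      rw [B.lt_iff_blockOf_lt hac', B.lt_iff_blockOf_lt hne, B.val_lt_iff hac', B.val_lt_iff hne,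
        hblk, hblk]
      exact ⟨Iff.rfl, Iff.rfl⟩
  refine IsOccurrence.contains (h := φ) ⟨fun a c hac => ?_, fun a c => ?_⟩
  · exact hh'.1.lt_iff_lt.mp ((hcmp a c).1.mp (hh.1 hac))
  · rw [hh.2, hh'.2]
    exact (hcmp a c).2

lemma contains_of_doubledBy_subset {τ' : Equiv.Perm (Fin k')} {h' : Fin k' → Fin N}
    (hh : IsOccurrence τ π h) (hh' : IsOccurrence τ' π h') (hmeet : B.MeetsAllBlocks h')
    (hsub : B.doubledBy h ⊆ B.doubledBy h') : Contains τ τ' := by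
  have hmatch : ∀ a, ∃ a', B.blockOf (h' a') = B.blockOf (h a) ∧
      (B.blockOf (h a) ∈ B.doubledBy h → h' a' = h a) := by
    intro a
    by_cases hd : B.blockOf (h a) ∈ B.doubledBy h
    · obtain ⟨-, ⟨a₁, ha₁⟩, a₂, ha₂⟩ := B.mem_doubledBy.mp (hsub hd)
      rcases B.val_eq_of_blockOf_eq (p := h a) rfl with hv | hv
      · have he : h' a₁ = h a := Fin.ext (ha₁.trans hv.symm)
        exact ⟨a₁, by rw [he], fun _ => he⟩
      · have he : h' a₂ = h a := Fin.ext (ha₂.trans hv.2.symm)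
        exact ⟨a₂, by rw [he], fun _ => he⟩
    · obtain ⟨a', ha'⟩ := hmeet (B.blockOf (h a))
      exact ⟨a', ha', fun hd' => absurd hd' hd⟩
  choose φ hφblk hφeq using hmatch
  exact B.contains_of_forall_blockOf_eq hh hh' φ hφblk hφeq

lemma blockOf_covBy_of_covBy (hh : IsOccurrence τ π h) (hmeet : B.MeetsAllBlocks h)
    {a c : Fin k} (hac : a ⋖ c) (hne : B.blockOf (h a) ≠ B.blockOf (h c)) :
    B.blockOf (h a) ⋖ B.blockOf (h c) := by
  refine ⟨(B.lt_iff_blockOf_lt hne).mp (hh.1 hac.lt), fun l hal hlc => ?_⟩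
  obtain ⟨b, rfl⟩ := hmeet l
  exact hac.2 (hh.1.lt_iff_lt.mp ((B.lt_iff_blockOf_lt hal.ne).mpr hal))
    (hh.1.lt_iff_lt.mp ((B.lt_iff_blockOf_lt hlc.ne).mpr hlc))

lemma covBy_blockOf_of_covBy (hh : IsOccurrence τ π h) (hmeet : B.MeetsAllBlocks h)
    {a c : Fin k} (hac : τ a ⋖ τ c) (hne : B.blockOf (h a) ≠ B.blockOf (h c)) :
    σ (B.blockOf (h a)) ⋖ σ (B.blockOf (h c)) := by
  refine ⟨(B.val_lt_iff hne).mp ((hh.2 a c).mp hac.lt), fun x hax hxc => ?_⟩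
  obtain ⟨l, rfl⟩ := σ.surjective x
  obtain ⟨b, rfl⟩ := hmeet l
  have hab : B.blockOf (h a) ≠ B.blockOf (h b) := fun he => (he ▸ hax).false
  have hbc : B.blockOf (h b) ≠ B.blockOf (h c) := fun he => (he ▸ hxc).false
  exact hh.not_between_of_covBy hac b ⟨(B.val_lt_iff hab).mpr hax, (B.val_lt_iff hbc).mpr hxc⟩

lemma mem_adjacencies_iff (hσ : AdjacencyFree σ) (hh : IsOccurrence τ π h)
    (hmeet : B.MeetsAllBlocks h) {p : Fin k} :
    p ∈ adjacencies τ ↔ ∃ i ∈ B.doubledBy h, (h p).val = blockStart B.size i := by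
  simp only [adjacencies, mem_filter, mem_univ, true_and]
  constructor
  · rintro ⟨q, hpq, hval⟩
    by_cases hblk : B.blockOf (h p) = B.blockOf (h q)
    · exact ⟨_, B.mem_doubledBy_of_blockOf_eq hh.1.injective hpq.lt.ne hblk,
        (B.val_eq_of_blockOf_eq_of_lt (hh.1 hpq.lt) hblk).2.1⟩
    · exact (hσ.not_covBy (B.blockOf_covBy_of_covBy hh hmeet hpq hblk)
        (hval.imp (B.covBy_blockOf_of_covBy hh hmeet · hblk)
          (B.covBy_blockOf_of_covBy hh hmeet · (Ne.symm hblk)))).elim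
  · rintro ⟨i, hi, hpi⟩
    obtain ⟨hsize, -, q, hq⟩ := B.mem_doubledBy.mp hi
    have hpq : p < q := hh.1.lt_iff_lt.mp (by rw [Fin.lt_def]; omega)
    have hblk : B.blockOf (h p) = B.blockOf (h q) := by
      rw [B.blockOf_eq (i := i) hpi.ge (by omega), B.blockOf_eq (i := i) (by omega) (by omega)]
    exact ⟨q, B.covBy_of_blockOf_eq hh hpq hblk⟩

lemma val_eq_expandedPos (hh : IsOccurrence τ π h) (hmeet : B.MeetsAllBlocks h) {p : Fin k}
    {i : Fin n} (hpi : (h p).val = blockStart B.size i) :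
    p.val = expandedPos (B.doubledBy h) i := by
  have hbelow : univ.filter (· < p) = univ.filter fun a => B.blockOf (h a) < i := by
    ext a
    simp only [mem_filter, mem_univ, true_and]
    rw [← hh.1.lt_iff_lt, Fin.lt_def, hpi, B.lt_blockStart_iff]
  have hfib : ∀ l ∈ Iio i, ((univ.filter fun a => B.blockOf (h a) < i).filter
      fun a => B.blockOf (h a) = l) = univ.filter fun a => B.blockOf (h a) = l := fun l hl => by
    ext a
    simp only [mem_filter, mem_univ, true_and, and_iff_right_iff_imp]
    exact fun ha => ha ▸ mem_Iio.mp hl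
  calc p.val = #(univ.filter (· < p)) := by rw [filter_gt_eq_Iio, Fin.card_Iio]
    _ = ∑ l ∈ Iio i, #{a | B.blockOf (h a) = l} := by
      rw [hbelow, card_eq_sum_card_fiberwise fun a ha => mem_Iio.mpr (mem_filter.mp ha).2]
      exact sum_congr rfl fun l hl => by rw [hfib l hl]
    _ = ∑ l ∈ Iio i, (1 + if l ∈ B.doubledBy h then 1 else 0) :=
      sum_congr rfl fun l _ => B.card_filter_blockOf_eq hh.1.injective hmeet l
    _ = expandedPos (B.doubledBy h) i := by
      rw [sum_add_distrib, sum_boole, sum_const, Fin.card_Iio, smul_eq_mul, mul_one, expandedPos,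
        Nat.cast_id]
      congr 2
      ext j
      simp [and_comm]

lemma image_expandedPos_doubledBy (hσ : AdjacencyFree σ) (hh : IsOccurrence τ π h)
    (hmeet : B.MeetsAllBlocks h) :
    (B.doubledBy h).image (expandedPos (B.doubledBy h)) = (adjacencies τ).image Fin.val := by
  ext v
  simp only [mem_image]
  constructor
  · rintro ⟨i, hi, rfl⟩
    obtain ⟨-, ⟨p, hp⟩, -⟩ := B.mem_doubledBy.mp hi
    exact ⟨p, (B.mem_adjacencies_iff hσ hh hmeet).mpr ⟨i, hi, hp⟩,
      B.val_eq_expandedPos hh hmeet hp⟩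
  · rintro ⟨p, hp, rfl⟩
    obtain ⟨i, hi, hpi⟩ := (B.mem_adjacencies_iff hσ hh hmeet).mp hp
    exact ⟨i, hi, (B.val_eq_expandedPos hh hmeet hpi).symm⟩

lemma doubledBy_eq_of_isOccurrence (hσ : AdjacencyFree σ) {h' : Fin k → Fin N}
    (hh : IsOccurrence τ π h) (hh' : IsOccurrence τ π h') (hmeet : B.MeetsAllBlocks h)
    (hmeet' : B.MeetsAllBlocks h') : B.doubledBy h = B.doubledBy h' :=
  eq_of_image_expandedPos_eq ((B.image_expandedPos_doubledBy hσ hh hmeet).trans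
    (B.image_expandedPos_doubledBy hσ hh' hmeet').symm)

lemma doubledBy_comp_subset (h : Fin k → Fin N) (f : Fin k' → Fin k) :
    B.doubledBy (h ∘ f) ⊆ B.doubledBy h := fun i hi => by
  obtain ⟨hsize, ⟨a₁, ha₁⟩, a₂, ha₂⟩ := B.mem_doubledBy.mp hi
  exact B.mem_doubledBy.mpr ⟨hsize, ⟨f a₁, ha₁⟩, f a₂, ha₂⟩

noncomputable def twoBlocks : Finset (Fin n) := univ.filter fun i => B.size i = 2

lemma doubledBy_subset_twoBlocks (h : Fin k → Fin N) : B.doubledBy h ⊆ B.twoBlocks :=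
  fun _ hi => mem_filter.mpr ⟨mem_univ _, (B.mem_doubledBy.mp hi).1⟩

lemma card_eq_add_card_twoBlocks : N = n + #B.twoBlocks := by
  have hmeet : B.MeetsAllBlocks id := fun i => ⟨_, B.blockOf_startPos i⟩
  convert B.length_eq Function.injective_id hmeet using 3
  refine (B.doubledBy_subset_twoBlocks id).antisymm' fun i hi => ?_
  have hsize : B.size i = 2 := (mem_filter.mp hi).2
  have := B.blockStart_add_size_le_card i
  exact B.mem_doubledBy.mpr
    ⟨hsize, ⟨⟨blockStart B.size i, by omega⟩, rfl⟩,
      ⟨blockStart B.size i + 1, by omega⟩, rfl⟩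

noncomputable def selection (T : Finset (Fin n)) : Finset (Fin N) :=
  univ.filter fun p => p.val = blockStart B.size (B.blockOf p) ∨ B.blockOf p ∈ T

lemma mem_selection {T : Finset (Fin n)} {p : Fin N} :
    p ∈ B.selection T ↔ p.val = blockStart B.size (B.blockOf p) ∨ B.blockOf p ∈ T := by
  simp [selection]

/-- The pattern `σ[α_T]`, where `α_T i = α i` for `i ∈ T` and `α_T i = 1` otherwise. -/
noncomputable def subpattern (T : Finset (Fin n)) : SigmaPerm :=
  ⟨#(B.selection T), patternOn π (B.selection T)⟩

lemma exists_selection_eq {T : Finset (Fin n)} {p : Fin N} (hp : p ∈ B.selection T) :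
    ∃ a, (B.selection T).orderEmbOfFin rfl a = p := by
  rw [← Set.mem_range, range_orderEmbOfFin]
  exact hp

lemma startPos_mem_selection (T : Finset (Fin n)) (i : Fin n) : B.startPos i ∈ B.selection T :=
  B.mem_selection.mpr (.inl (by rw [B.blockOf_startPos]; rfl))

lemma meetsAllBlocks_selection (T : Finset (Fin n)) :
    B.MeetsAllBlocks ((B.selection T).orderEmbOfFin rfl) := fun i => by
  obtain ⟨a, ha⟩ := B.exists_selection_eq (B.startPos_mem_selection T i)
  exact ⟨a, by rw [ha, B.blockOf_startPos]⟩

lemma doubledBy_selection {T : Finset (Fin n)} (hT : T ⊆ B.twoBlocks) :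
    B.doubledBy ((B.selection T).orderEmbOfFin rfl) = T := by
  ext i
  rw [B.mem_doubledBy]
  constructor
  · rintro ⟨hsize, -, a, ha⟩
    have hblk : B.blockOf ((B.selection T).orderEmbOfFin rfl a) = i :=
      B.blockOf_eq (by omega) (by omega)
    have hmem := (B.selection T).orderEmbOfFin_mem rfl a
    rw [B.mem_selection, hblk] at hmem
    exact hmem.resolve_left (by omega)
  · intro hi
    have hsize : B.size i = 2 := (mem_filter.mp (hT hi)).2
    have := B.blockStart_add_size_le_card i
    obtain ⟨a₁, ha₁⟩ := B.exists_selection_eq (B.startPos_mem_selection T i)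
    have hblk : B.blockOf ⟨blockStart B.size i + 1, by omega⟩ = i :=
      B.blockOf_eq (by simp) (by simp; omega)
    obtain ⟨a₂, ha₂⟩ := B.exists_selection_eq (B.mem_selection.mpr (.inr (hblk ▸ hi)))
    exact ⟨hsize, ⟨a₁, by rw [ha₁]; rfl⟩, a₂, by rw [ha₂]⟩

lemma fst_subpattern {T : Finset (Fin n)} (hT : T ⊆ B.twoBlocks) :
    (B.subpattern T).1 = n + #T := by
  have := B.length_eq ((B.selection T).orderEmbOfFin rfl).injective (B.meetsAllBlocks_selection T)
  rwa [B.doubledBy_selection hT] at this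

lemma subpattern_contains (T : Finset (Fin n)) : SContains (B.subpattern T) ⟨N, π⟩ :=
  (isOccurrence_patternOn π _).contains

lemma contains_subpattern (T : Finset (Fin n)) : SContains ⟨n, σ⟩ (B.subpattern T) :=
  show Contains σ (patternOn π (B.selection T)) from
    B.contains_of_doubledBy_subset B.isOccurrence_startPos (isOccurrence_patternOn π _)
      (B.meetsAllBlocks_selection T) (by rw [B.doubledBy_startPos]; exact empty_subset _)

lemma subpattern_contains_subpattern {T U : Finset (Fin n)} (hTU : T ⊆ U)
    (hU : U ⊆ B.twoBlocks) : SContains (B.subpattern T) (B.subpattern U) :=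
  show Contains (patternOn π (B.selection T)) (patternOn π (B.selection U)) from
    B.contains_of_doubledBy_subset (isOccurrence_patternOn π _) (isOccurrence_patternOn π _)
      (B.meetsAllBlocks_selection U)
      (by rwa [B.doubledBy_selection (hTU.trans hU), B.doubledBy_selection hU])

lemma subset_of_subpattern_contains (hσ : AdjacencyFree σ) {T U : Finset (Fin n)}
    (hT : T ⊆ B.twoBlocks) (hU : U ⊆ B.twoBlocks)
    (hTU : SContains (B.subpattern T) (B.subpattern U)) : T ⊆ U := by
  obtain ⟨f, hf⟩ := Contains.exists_isOccurrence hTU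
  have hg := (isOccurrence_patternOn π (B.selection U)).comp hf
  have hmeet := B.meetsAllBlocks_of_contains hσ hg (B.contains_subpattern T)
  calc T = B.doubledBy ((B.selection T).orderEmbOfFin rfl) := (B.doubledBy_selection hT).symm
    _ = B.doubledBy (((B.selection U).orderEmbOfFin rfl) ∘ f) :=
      B.doubledBy_eq_of_isOccurrence hσ (isOccurrence_patternOn π _) hg
        (B.meetsAllBlocks_selection T) hmeet
    _ ⊆ B.doubledBy ((B.selection U).orderEmbOfFin rfl) := B.doubledBy_comp_subset _ _
    _ = U := B.doubledBy_selection hU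

lemma exists_eq_subpattern (hσ : AdjacencyFree σ) {τ : SigmaPerm}
    (hστ : SContains ⟨n, σ⟩ τ) (hτπ : SContains τ ⟨N, π⟩) :
    ∃ T ⊆ B.twoBlocks, τ = B.subpattern T := by
  obtain ⟨f, hf⟩ := Contains.exists_isOccurrence hτπ
  have hmeet := B.meetsAllBlocks_of_contains hσ hf hστ
  have hT := B.doubledBy_subset_twoBlocks f
  refine ⟨_, hT, SContains.eq_of_fst_eq ?_ ?_⟩
  · exact B.contains_of_doubledBy_subset hf (isOccurrence_patternOn π _)
      (B.meetsAllBlocks_selection _) (B.doubledBy_selection hT).ge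
  · rw [B.fst_subpattern hT]
    exact B.length_eq hf.1.injective hmeet

end ShortInflation

/-- Removing the second point of any set of blocks of size two gives an order isomorphism from
the Boolean lattice on the blocks of size two onto the interval `[σ, π]`. -/
theorem ShortInflation.exists_intervalEquiv {n N : ℕ} {σ : Equiv.Perm (Fin n)}
    {π : Equiv.Perm (Fin N)} (B : ShortInflation σ π) (hσ : AdjacencyFree σ) :
    ∃ e : PatternInterval ⟨n, σ⟩ ⟨N, π⟩ ≃ Finset (Fin (N - n)),
      ∀ x y, SContains x.1 y.1 ↔ e x ⊆ e y := by
  have hcard : #B.twoBlocks = N - n := by have := B.card_eq_add_card_twoBlocks; omega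
  let emb : Fin (N - n) ↪ Fin n := (B.twoBlocks.orderEmbOfFin hcard).toEmbedding
  have hemb : ∀ A : Finset (Fin (N - n)), A.map emb ⊆ B.twoBlocks := fun A => by
    simpa [emb] using (map_subset_map (f := emb)).mpr (subset_univ A)
  refine exists_equiv_finset_of_surjective _
    (fun A => ⟨B.subpattern (A.map emb), B.contains_subpattern _, B.subpattern_contains _⟩)
    ?_ fun A A' =>
      ⟨fun h => map_subset_map.mp (B.subset_of_subpattern_contains hσ (hemb A) (hemb A') h),
        fun h => B.subpattern_contains_subpattern (map_subset_map.mpr h) (hemb A')⟩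
  rintro ⟨τ, hστ, hτπ⟩
  obtain ⟨T, hT, rfl⟩ := B.exists_eq_subpattern hσ hστ hτπ
  obtain ⟨A, -, rfl⟩ := subset_map_iff.mp (hT.trans (map_orderEmbOfFin_univ _ hcard).ge)
  exact ⟨A, rfl⟩

theorem boolean_lattice_inflation (n N : ℕ) (σ : Equiv.Perm (Fin n))
    (α : Fin n → SigmaPerm) (π : Equiv.Perm (Fin N))
    (hσ : AdjacencyFree σ) (hinf : IsInflation σ α π) :
    ((∀ i, α i = ⟨1, pone⟩ ∨ α i = ⟨2, p12⟩ ∨ α i = ⟨2, p21⟩) →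
      (∃ e : {τ : SigmaPerm // SContains ⟨n, σ⟩ τ ∧ SContains τ ⟨N, π⟩} ≃ Finset (Fin (N - n)),
        ∀ x y, SContains x.1 y.1 ↔ e x ⊆ e y) ∧
      mu σ N π = (-1) ^ (N - n)) ∧
    (mu σ N π = 0 →
      ∃ i, ¬ (α i = ⟨1, pone⟩ ∨ α i = ⟨2, p12⟩ ∨ α i = ⟨2, p21⟩)) := by
  have boolean : (∀ i, α i = ⟨1, pone⟩ ∨ α i = ⟨2, p12⟩ ∨ α i = ⟨2, p21⟩) →
      (∃ e : PatternInterval ⟨n, σ⟩ ⟨N, π⟩ ≃ Finset (Fin (N - n)),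
        ∀ x y, SContains x.1 y.1 ↔ e x ⊆ e y) ∧ mu σ N π = (-1) ^ (N - n) := by
    intro hα
    obtain ⟨B⟩ := hinf.nonempty_shortInflation hα
    obtain ⟨e, he⟩ := B.exists_intervalEquiv hσ
    exact ⟨⟨e, he⟩, mu_eq_neg_one_pow_of_orderIso e he⟩
  refine ⟨boolean, fun hmu => ?_⟩
  by_contra! hα
  rw [(boolean hα).2] at hmu
  exact pow_ne_zero _ (by norm_num) hmu
end
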